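/- Let p : Y → X be a semicovering map with p(y₀) = x₀. If α ∈ (𝒫X)_{x₀} is a well-targeted path, then its unique lift α̃ starting at y₀ is a well-targeted path in Y. -/

import Mathlib

open unitInterval

variable {X Y : Type*} [TopologicalSpace X] [TopologicalSpace Y]

/-- The space of paths in `X` starting at `x`, with the compact-open topology. -/
abbrev PathsFrom (X : Type*) [TopologicalSpace X] (x : X) : Type _ :=
  {α : C(I, X) // α 0 = x}

/-- Postcomposition `𝒫p : (𝒫Y)_y → (𝒫X)_{p(y)}`. -/
def pathPost (p : C(Y, X)) (y : Y) (α : PathsFrom Y y) : PathsFrom X (p y) :=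
  ⟨p.comp α.1, by simp [α.2]⟩

/-- The space of homotopies of paths starting at `x` (the initial-endpoint edge is fixed at `x`),
with the compact-open topology. -/
abbrev HtpysFrom (X : Type*) [TopologicalSpace X] (x : X) : Type _ :=
  {φ : C(I × I, X) // ∀ s, φ (s, 0) = x}

/-- Postcomposition `Φp : (ΦY)_y → (ΦX)_{p(y)}`. -/
def htpyPost (p : C(Y, X)) (y : Y) (φ : HtpysFrom Y y) : HtpysFrom X (p y) :=
  ⟨p.comp φ.1, by simp [φ.2]⟩

/-- A semicovering map: a local homeomorphism with continuous lifting of paths and homotopies. -/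
structure IsSemicoveringMap (p : C(Y, X)) : Prop where
  isLocalHomeomorph : IsLocalHomeomorph p
  pathLifting : ∀ y : Y, IsHomeomorph (pathPost p y)
  htpyLifting : ∀ y : Y, IsHomeomorph (htpyPost p y)
open unitInterval Topology

/-- A path `α` is well-targeted if every neighborhood `U` of `α` in the space of paths
starting at `α 0` admits an open neighborhood `V` of `α 1` each of whose points is the
endpoint of some path in `U`. -/
def IsWellTargeted {X : Type*} [TopologicalSpace X] (α : C(I, X)) : Prop :=
  ∀ U : Set {β : C(I, X) // β 0 = α 0}, IsOpen U →
    (⟨α, rfl⟩ : {β : C(I, X) // β 0 = α 0}) ∈ U →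
    ∃ V : Set X, IsOpen V ∧ α 1 ∈ V ∧ ∀ b ∈ V, ∃ β ∈ U, β.1 1 = b


theorem isOpen_setOf_pathsFrom_endpoint_mem {y : Y} {W : Set Y} (hW : IsOpen W) :
    IsOpen {δ : PathsFrom Y y | δ.1 1 ∈ W} :=
  hW.preimage ((continuous_eval_const 1).comp continuous_subtype_val)

/-- The endpoint of a path near `γ` is pinned down by its image under `p` once it is
required to lie in a neighbourhood of `γ 1` on which `p` is injective. -/
theorem IsWellTargeted.of_comp {p : C(Y, X)} {γ : C(I, Y)} (hinj : IsLocallyInjective p)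
    (hopen : IsOpenMap (pathPost p (γ 0))) (h : IsWellTargeted (p.comp γ)) :
    IsWellTargeted γ := by
  intro U hU hγU
  obtain ⟨W, hW, hγW, hpW⟩ := hinj (γ 1)
  let U' := U ∩ {δ : PathsFrom Y (γ 0) | δ.1 1 ∈ W}
  have hU' : IsOpen U' := hU.inter (isOpen_setOf_pathsFrom_endpoint_mem hW)
  obtain ⟨V, hV, hγV, hVend⟩ :=
    h (pathPost p (γ 0) '' U') (hopen U' hU') ⟨⟨γ, rfl⟩, ⟨hγU, hγW⟩, rfl⟩
  refine ⟨W ∩ p ⁻¹' V, hW.inter (hV.preimage p.continuous), ⟨hγW, hγV⟩, ?_⟩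
  rintro b ⟨hbW, hbV⟩
  obtain ⟨_, ⟨δ, ⟨hδU, hδW⟩, rfl⟩, hδb⟩ := hVend (p b) hbV
  exact ⟨δ, hδU, hpW hδW hbW hδb⟩

theorem isWellTargeted_lift_general {X Y : Type*} [TopologicalSpace X] [TopologicalSpace Y]
    (p : C(Y, X)) (hp : IsSemicoveringMap p) (y₀ : Y) (α : C(I, X))
    (hwt : IsWellTargeted α) :
    ∀ γ : C(I, Y), γ 0 = y₀ → p.comp γ = α → IsWellTargeted γ := by
  rintro γ - rfl
  exact hwt.of_comp hp.isLocalHomeomorph.isLocallyInjective (hp.pathLifting (γ 0)).isOpenMap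

/-- Lifts of well-targeted paths through a semicovering are well-targeted: if `p` is a
semicovering with `p y₀ = x₀` and `α` is a well-targeted path starting at `x₀`, then the
(unique) lift of `α` starting at `y₀` is well-targeted. -/
theorem isWellTargeted_lift {X Y : Type*} [TopologicalSpace X] [TopologicalSpace Y]
    (p : C(Y, X)) (hp : IsSemicoveringMap p) (y₀ : Y) (α : C(I, X)) (hα : α 0 = p y₀)
    (hwt : IsWellTargeted α) :
    ∀ γ : C(I, Y), γ 0 = y₀ → p.comp γ = α → IsWellTargeted γ :=
  isWellTargeted_lift_general p hp y₀ α hwt
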